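/- Let x = (d,m) ∈ 𝓡 and let p ∈ ℝ³ satisfy p × d = m (p lies on the underlying line of x). Let R ∈ SO(3) with R·e₃ = d and set s(x) = (R, d × m) ∈ SE(3). Then s(x)⁻¹·p = ⟨p − d × m, d⟩·e₃; in particular the point s(x)⁻¹·p lies on the z-axis. -/

import Mathlib

noncomputable section
open scoped InnerProductSpace

/-- ℝ³ with the Euclidean norm. -/
abbrev E3 : Type := EuclideanSpace ℝ (Fin 3)

/-- Elements of SE(3): a pair of a 3×3 matrix and a translation vector. -/
abbrev SE3 : Type := Matrix (Fin 3) (Fin 3) ℝ × E3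

/-- Matrix-vector multiplication on ℝ³. -/
def mv (R : Matrix (Fin 3) (Fin 3) ℝ) (v : E3) : E3 := WithLp.toLp 2 (R.mulVec v)

/-- Cross product on ℝ³. -/
def cross3 (a b : E3) : E3 :=
  WithLp.toLp 2 ![a 1 * b 2 - a 2 * b 1, a 2 * b 0 - a 0 * b 2, a 0 * b 1 - a 1 * b 0]

/-- `R` is a special orthogonal 3×3 matrix: `RᵀR = I` and `det R = 1`. -/
def isSO3 (R : Matrix (Fin 3) (Fin 3) ℝ) : Prop :=
  R.transpose * R = 1 ∧ R.det = 1

/-- `(d, m)` are Plücker coordinates of an oriented line: `d` is a unit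
direction and `m` is a moment with `⟨d, m⟩ = 0`. -/
def isRay (d m : E3) : Prop := ‖d‖ = 1 ∧ ⟪d, m⟫_ℝ = 0

/-- The standard basis vector e₁. -/
def e1 : E3 := WithLp.toLp 2 ![1, 0, 0]

/-- The standard basis vector e₂. -/
def e2 : E3 := WithLp.toLp 2 ![0, 1, 0]

/-- The standard basis vector e₃. -/
def e3 : E3 := WithLp.toLp 2 ![0, 0, 1]

/-- Action of `(R, t) ∈ SE(3)` on Plücker coordinates:
`(R,t)·(d,m) = (Rd, Rm + t × (Rd))`. -/
def rayAct (R : Matrix (Fin 3) (Fin 3) ℝ) (t : E3) (d m : E3) : E3 × E3 :=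
  (mv R d, mv R m + cross3 t (mv R d))

/-- Multiplication in SE(3): `(R₁,t₁)·(R₂,t₂) = (R₁R₂, t₁ + R₁t₂)`. -/
def se3Mul (g₁ g₂ : SE3) : SE3 := (g₁.1 * g₂.1, g₁.2 + mv g₁.1 g₂.2)

/-- Inverse in SE(3) (for `g.1 ∈ SO(3)`): `(R,t)⁻¹ = (Rᵀ, -Rᵀt)`. -/
def se3Inv (g : SE3) : SE3 := (g.1.transpose, -(mv g.1.transpose g.2))

/-- Action of `g ∈ SE(3)` on the ray space. -/
def act (g : SE3) (x : E3 × E3) : E3 × E3 := rayAct g.1 g.2 x.1 x.2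

/-- Action of `g = (R,t) ∈ SE(3)` on points of ℝ³: `g·p = Rp + t`. -/
def actPt (g : SE3) (p : E3) : E3 := mv g.1 p + g.2

/-- The origin ray `η = (e₃, 0)`. -/
def eta : E3 × E3 := (e3, 0)

/-- The twist `h(g, x) = s(g·x)⁻¹ · g · s(x)` of a section `s`. -/
def twist (s : E3 × E3 → SE3) (g : SE3) (x : E3 × E3) : SE3 :=
  se3Mul (se3Inv (s (act g x))) (se3Mul g (s x))

/-- Rotation by γ about the z-axis. -/
def RZ (γ : ℝ) : Matrix (Fin 3) (Fin 3) ℝ :=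
  !![Real.cos γ, -Real.sin γ, 0; Real.sin γ, Real.cos γ, 0; 0, 0, 1]

/-- Rotation by β about the y-axis. -/
def RY (β : ℝ) : Matrix (Fin 3) (Fin 3) ℝ :=
  !![Real.cos β, 0, Real.sin β; 0, 1, 0; -Real.sin β, 0, Real.cos β]

/-- The underlying line of the ray with Plücker coordinates `(d, m)`:
`L(d,m) = {p : p × d = m}`. -/
def lineOf (d m : E3) : Set E3 := {p : E3 | cross3 p d = m}

/-- Infimum of the Euclidean distances between points of the line `L(d,m)`
and points of the z-axis. -/
def Dzaxis (d m : E3) : ℝ :=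
  sInf {r : ℝ | ∃ p ∈ lineOf d m, ∃ s : ℝ, r = dist p (s • e3)}

/-- The z-coordinate `g(x) = e₃·(c - λ·d)` (with `c = d × m` and
`λ = ((e₁·c)(e₁·d) + (e₂·c)(e₂·d))/(1 - (e₃·d)²)`) of the point of `L(d,m)`
closest to the z-axis (for `d ≠ ±e₃`). -/
def zfoot (d m : E3) : ℝ :=
  ⟪e3, cross3 d m - ((⟪e1, cross3 d m⟫_ℝ * ⟪e1, d⟫_ℝ + ⟪e2, cross3 d m⟫_ℝ * ⟪e2, d⟫_ℝ)
      / (1 - ⟪e3, d⟫_ℝ ^ 2)) • d⟫_ℝ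

/-! By the vector triple product expansion, a point `p` with `p × d = m` and `‖d‖ = 1` satisfies
`p - d × m = ⟨p, d⟩ d`. Hence `s(x)⁻¹·p = Rᵀ(p - d × m) = ⟨p, d⟩ Rᵀd = ⟨p, d⟩ e₃`, since `Rᵀ`
inverts `R`. -/

open Matrix

lemma cross3_eq_toLp_crossProduct (a b : E3) :
    cross3 a b = WithLp.toLp 2 (WithLp.ofLp a ⨯₃ WithLp.ofLp b) := by
  rw [cross3, cross_apply]

lemma real_inner_eq_dotProduct (a b : E3) : ⟪a, b⟫_ℝ = WithLp.ofLp a ⬝ᵥ WithLp.ofLp b := by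
  rw [EuclideanSpace.inner_eq_star_dotProduct, star_trivial, dotProduct_comm]

lemma cross3_cross3 (u v w : E3) : cross3 u (cross3 v w) = ⟪u, w⟫_ℝ • v - ⟪v, u⟫_ℝ • w := by
  simp only [cross3_eq_toLp_crossProduct, cross_cross_eq_smul_sub_smul', real_inner_eq_dotProduct]
  rfl

lemma sub_cross3_cross3_eq_inner_smul {d : E3} (hd : ‖d‖ = 1) (p : E3) :
    p - cross3 d (cross3 p d) = ⟪p, d⟫_ℝ • d := by
  rw [cross3_cross3, real_inner_self_eq_norm_sq, hd]
  simp

lemma mv_smul (R : Matrix (Fin 3) (Fin 3) ℝ) (c : ℝ) (v : E3) : mv R (c • v) = c • mv R v := by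
  simp only [mv, WithLp.ofLp_smul, mulVec_smul, WithLp.toLp_smul]

lemma mv_transpose_of_mv_eq {R : Matrix (Fin 3) (Fin 3) ℝ} (hR : Rᵀ * R = 1) {v w : E3}
    (h : mv R v = w) : mv Rᵀ w = v := by
  rw [← h, mv, mv, WithLp.ofLp_toLp, mulVec_mulVec, hR, one_mulVec, WithLp.toLp_ofLp]

lemma actPt_se3Inv (R : Matrix (Fin 3) (Fin 3) ℝ) (t p : E3) :
    actPt (se3Inv (R, t)) p = mv Rᵀ (p - t) := by
  simp only [actPt, se3Inv, mv, WithLp.ofLp_sub, mulVec_sub, WithLp.toLp_sub]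
  abel

/-- for `p` on the line of the ray `x = (d,m)` and
`s(x) = (R, d × m)` with `R·e₃ = d`, the point `s(x)⁻¹·p = ⟨p − d × m, d⟩·e₃`
lies on the z-axis. -/
theorem statement16 (d m : E3) (h : isRay d m) (p : E3) (hp : cross3 p d = m)
    (R : Matrix (Fin 3) (Fin 3) ℝ) (hR : isSO3 R) (hRe : mv R e3 = d) :
    actPt (se3Inv (R, cross3 d m)) p = ⟪p - cross3 d m, d⟫_ℝ • e3 ∧
    ∃ τ : ℝ, actPt (se3Inv (R, cross3 d m)) p = τ • e3 := by
  obtain ⟨hd, -⟩ := h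
  subst hp
  have hline := sub_cross3_cross3_eq_inner_smul hd p
  have hpt : actPt (se3Inv (R, cross3 d (cross3 p d))) p = ⟪p, d⟫_ℝ • e3 := by
    rw [actPt_se3Inv, hline, mv_smul, mv_transpose_of_mv_eq hR.1 hRe]
  refine ⟨?_, _, hpt⟩
  rw [hpt, hline, real_inner_smul_left, real_inner_self_eq_norm_sq, hd]
  simp

end
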